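/- arXiv:1307.2700 — 4 statements merged into one kernel-verified Lean document; each statement's English description precedes it below -/
import Mathlib

section
/- Let P be a finite set of points in ℝ^d, let p, q ∈ P with p ≠ q, and let C(p) be a cone with apex p of opening angle at most π/3 containing q, whose axis direction is the unit vector x_l. If p is a nearest neighbor of q in P (i.e., |pq| ≤ |p'q| for all p' ∈ P \ {q}), then q minimizes the inner product ⟨x_l, r - p⟩ among all points r ∈ P ∩ C(p) \ {p}; that is, for every r ∈ P ∩ C(p) with r ≠ p, ⟨x_l, q - p⟩ ≤ ⟨x_l, r - p⟩. -/
/-!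
Put `a = q - p` and `b = r - p`, and let `α, β ≤ π/6` be their angles to the axis. Since `p` is
nearest to `q`, `‖a‖ ≤ ‖a - b‖`, i.e. `2⟪a, b⟫ ≤ ‖b‖²`; by the triangle inequality for angles,
`⟪a, b⟫ ≥ ‖a‖‖b‖ cos (α + β)`. Hence `‖b‖ ≥ 2‖a‖ cos (α + β)`, and
`‖b‖ cos β ≥ 2‖a‖ cos (α + β) cos β = ‖a‖ (cos (α + 2β) + cos α) ≥ ‖a‖ cos α`
because `α + 2β ≤ π/2`.
-/

open InnerProductGeometry Real

section

variable {V : Type*} [NormedAddCommGroup V] [InnerProductSpace ℝ V]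

lemma two_mul_inner_le_norm_sq_of_norm_le_norm_sub {a b : V} (h : ‖a‖ ≤ ‖a - b‖) :
    2 * inner ℝ a b ≤ ‖b‖ ^ 2 := by
  have hsq : ‖a‖ ^ 2 ≤ ‖a - b‖ ^ 2 := pow_le_pow_left₀ (norm_nonneg a) h 2
  rw [norm_sub_sq_real] at hsq
  linarith

lemma norm_mul_norm_mul_cos_angle_add_angle_le_inner (a b x : V)
    (h : angle a x + angle b x ≤ π) :
    ‖a‖ * ‖b‖ * Real.cos (angle a x + angle b x) ≤ inner ℝ a b := by
  have htri : angle a b ≤ angle a x + angle b x := by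
    simpa only [angle_comm x b] using angle_le_angle_add_angle a x b
  rw [← cos_angle_mul_norm_mul_norm, mul_comm (Real.cos _)]
  exact mul_le_mul_of_nonneg_left (cos_le_cos_of_nonneg_of_le_pi (angle_nonneg a b) h htri)
    (by positivity)

lemma inner_le_inner_of_norm_le_norm_sub {x a b : V} (hab : ‖a‖ ≤ ‖a - b‖)
    (ha : angle a x ≤ π / 6) (hb : angle b x ≤ π / 6) :
    inner ℝ x a ≤ inner ℝ x b := by
  set α := angle a x
  set β := angle b x
  have hα := angle_nonneg a x
  have hβ := angle_nonneg b x
  have hb0 : 0 < ‖b‖ := by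
    refine norm_pos_iff.mpr fun hzero => ?_
    have : β = π / 2 := by simp only [β, hzero, angle_zero_left]
    linarith [pi_pos]
  have hnorm : 2 * ‖a‖ * Real.cos (α + β) ≤ ‖b‖ := by
    have hsq := two_mul_inner_le_norm_sq_of_norm_le_norm_sub hab
    have hangle := norm_mul_norm_mul_cos_angle_add_angle_le_inner a b x
      (by linarith [pi_pos])
    nlinarith
  have hcosβ : 0 ≤ Real.cos β := cos_nonneg_of_neg_pi_div_two_le_of_le (by linarith) (by linarith)
  have hcos : 0 ≤ Real.cos (α + 2 * β) :=
    cos_nonneg_of_neg_pi_div_two_le_of_le (by linarith) (by linarith)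
  have hprod : 2 * Real.cos (α + β) * Real.cos β = Real.cos (α + 2 * β) + Real.cos α := by
    rw [cos_add_cos]; ring_nf
  have key : ‖a‖ * Real.cos α ≤ ‖b‖ * Real.cos β := by
    nlinarith [mul_le_mul_of_nonneg_right hnorm hcosβ, norm_nonneg a]
  rw [← cos_angle_mul_norm_mul_norm, ← cos_angle_mul_norm_mul_norm, angle_comm x a,
    angle_comm x b]
  nlinarith [norm_nonneg x]

end

theorem stmt1_general {d : ℕ} (P : Finset (EuclideanSpace ℝ (Fin d)))
    (p q : EuclideanSpace ℝ (Fin d))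
    (xl : EuclideanSpace ℝ (Fin d))
    (θ : ℝ) (hθ : θ ≤ Real.pi / 3)
    (hqcone : InnerProductGeometry.angle (q - p) xl ≤ θ / 2)
    (hnear : ∀ p' ∈ P, p' ≠ q → dist p q ≤ dist p' q) :
    ∀ r ∈ P, InnerProductGeometry.angle (r - p) xl ≤ θ / 2 → r ≠ p →
      (inner ℝ xl (q - p) : ℝ) ≤ (inner ℝ xl (r - p) : ℝ) := by
  intro r hr hrcone _
  rcases eq_or_ne r q with rfl | hrq
  · exact le_rfl
  have hdist : ‖q - p‖ ≤ ‖(q - p) - (r - p)‖ := by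
    simpa only [dist_eq_norm, norm_sub_rev p q, norm_sub_rev r q, sub_sub_sub_cancel_right]
      using hnear r hr hrq
  exact inner_le_inner_of_norm_le_norm_sub hdist (by linarith) (by linarith)

/-- Lemma 1 / Lemma 8.1 of Agarwal–Kaplan–Sharir: if `p` is a nearest
neighbor of `q` in `P` and `q` lies in the cone with apex `p`, axis `xl`, opening
angle `θ ≤ π/3`, then `q` minimizes the projection `⟪xl, · - p⟫` over `P ∩ C(p) \ {p}`. -/
theorem stmt1 {d : ℕ} (P : Finset (EuclideanSpace ℝ (Fin d)))
    (p q : EuclideanSpace ℝ (Fin d)) (hp : p ∈ P) (hq : q ∈ P) (hpq : p ≠ q)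
    (xl : EuclideanSpace ℝ (Fin d)) (hxl : ‖xl‖ = 1)
    (θ : ℝ) (hθ : θ ≤ Real.pi / 3)
    (hqcone : InnerProductGeometry.angle (q - p) xl ≤ θ / 2)
    (hnear : ∀ p' ∈ P, p' ≠ q → dist p q ≤ dist p' q) :
    ∀ r ∈ P, InnerProductGeometry.angle (r - p) xl ≤ θ / 2 → r ≠ p →
      (inner ℝ xl (q - p) : ℝ) ≤ (inner ℝ xl (r - p) : ℝ) :=
  stmt1_general P p q xl θ hθ hqcone hnear
end

section
/- Let P be a finite set of points in ℝ^d and suppose the cones C_1, …, C_c (each of opening angle at most π/3, with axis unit vectors x_1, …, x_c) cover ℝ^d around every apex, i.e., for every p ∈ P and q ∈ P \ {p} there exists l with q ∈ C_l(p). Then the nearest neighbor graph of P is a subgraph of the Semi-Yao graph of P: if p is a nearest neighbor of q in P, then (p,q) is an edge of the Semi-Yao graph. -/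
/-!
If `p` is a nearest neighbour of `q`, take the cone `C l(p)` containing `q`. Any `r` in the same
cone with a strictly smaller projection on the axis would be strictly closer to `q` than `p`:
writing `u = q - p`, `v = r - p`, both make an angle at most `π/6` with the axis, so their
components orthogonal to the axis are at most `1/√3` times their axial components `a > b > 0`.
Hence `⟪u, v⟫ ≥ ab - ab/3` while `‖v‖² ≤ 4b²/3 < 4ab/3`, i.e. `‖u - v‖² < ‖u‖²`.
-/

open InnerProductGeometry Real

section ConeAroundUnitAxis

variable {E : Type*} [NormedAddCommGroup E] [InnerProductSpace ℝ E] {x : E}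

theorem norm_sub_inner_smul_sq (hx : ‖x‖ = 1) (v : E) :
    ‖v - inner ℝ x v • x‖ ^ 2 = ‖v‖ ^ 2 - inner ℝ x v ^ 2 := by
  rw [norm_sub_sq_real, real_inner_smul_right, real_inner_comm, norm_smul, hx,
    Real.norm_eq_abs]
  ring_nf
  rw [sq_abs]
  ring

theorem sqrt_three_div_two_mul_norm_le_inner (hx : ‖x‖ = 1) {v : E}
    (hv : angle v x ≤ π / 6) : √3 / 2 * ‖v‖ ≤ inner ℝ x v := by
  have hcos : √3 / 2 ≤ Real.cos (angle v x) := by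
    rw [← Real.cos_pi_div_six]
    exact Real.cos_le_cos_of_nonneg_of_le_pi (angle_nonneg v x) (by linarith [pi_pos]) hv
  calc √3 / 2 * ‖v‖ ≤ Real.cos (angle v x) * ‖v‖ :=
        mul_le_mul_of_nonneg_right hcos (norm_nonneg v)
    _ = inner ℝ x v := by
        rw [real_inner_comm, ← cos_angle_mul_norm_mul_norm, hx, mul_one]

theorem three_mul_norm_sq_le_four_mul_inner_sq (hx : ‖x‖ = 1) {v : E}
    (hv : angle v x ≤ π / 6) : 3 * ‖v‖ ^ 2 ≤ 4 * inner ℝ x v ^ 2 := by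
  have hsq := pow_le_pow_left₀ (by positivity) (sqrt_three_div_two_mul_norm_le_inner hx hv) 2
  rw [mul_pow, div_pow, Real.sq_sqrt (by norm_num)] at hsq
  linarith

theorem sqrt_three_mul_norm_sub_inner_smul_le (hx : ‖x‖ = 1) {v : E}
    (hv : angle v x ≤ π / 6) : √3 * ‖v - inner ℝ x v • x‖ ≤ inner ℝ x v := by
  have hinner_nonneg : 0 ≤ inner ℝ x v :=
    le_trans (by positivity) (sqrt_three_div_two_mul_norm_le_inner hx hv)
  refine (pow_le_pow_iff_left₀ (by positivity) hinner_nonneg two_ne_zero).mp ?_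
  rw [mul_pow, norm_sub_inner_smul_sq hx, Real.sq_sqrt (by norm_num)]
  linarith [three_mul_norm_sq_le_four_mul_inner_sq hx hv]

theorem norm_sub_lt_norm_of_inner_lt (hx : ‖x‖ = 1) {u v : E}
    (hu : angle u x ≤ π / 6) (hv : angle v x ≤ π / 6)
    (huv : inner ℝ x v < inner ℝ x u) : ‖u - v‖ < ‖u‖ := by
  set a : ℝ := inner ℝ x u
  set b : ℝ := inner ℝ x v
  have hv0 : v ≠ 0 := by
    rintro rfl
    rw [angle_zero_left] at hv
    linarith [pi_pos]
  have hb_pos : 0 < b :=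
    lt_of_lt_of_le (by positivity) (sqrt_three_div_two_mul_norm_le_inner hx hv)
  have hperp : 3 * (‖u - a • x‖ * ‖v - b • x‖) ≤ a * b :=
    calc 3 * (‖u - a • x‖ * ‖v - b • x‖) = (√3 * ‖u - a • x‖) * (√3 * ‖v - b • x‖) := by
          rw [mul_mul_mul_comm, Real.mul_self_sqrt (by norm_num)]
      _ ≤ a * b := mul_le_mul (sqrt_three_mul_norm_sub_inner_smul_le hx hu)
          (sqrt_three_mul_norm_sub_inner_smul_le hx hv) (by positivity) (by linarith)
  have hinner_perp : inner ℝ (u - a • x) (v - b • x) = inner ℝ u v - a * b := by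
    simp only [inner_sub_left, inner_sub_right, real_inner_smul_left, real_inner_smul_right,
      real_inner_self_eq_norm_sq, hx, real_inner_comm x u]
    ring
  have huv_inner : 2 / 3 * (a * b) ≤ inner ℝ u v := by
    linarith [neg_le_of_abs_le (abs_real_inner_le_norm (u - a • x) (v - b • x))]
  have hsq : ‖u - v‖ ^ 2 < ‖u‖ ^ 2 := by
    rw [norm_sub_sq_real]
    linarith [three_mul_norm_sq_le_four_mul_inner_sq hx hv, mul_pos hb_pos (sub_pos.mpr huv)]
  exact lt_of_pow_lt_pow_left₀ 2 (norm_nonneg u) hsq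

end ConeAroundUnitAxis

/-- Lemma 2: if the cones `C l` (opening angle ≤ π/3, axis `x l`) cover the
space around every apex, then every nearest-neighbor edge `(p, q)` is a Semi-Yao edge:
there is a cone `C l` with apex `p` containing `q` in which `q` minimizes the
projection on the axis `x l`. -/
theorem stmt2 {d c : ℕ} (P : Finset (EuclideanSpace ℝ (Fin d)))
    (C : Fin c → Set (EuclideanSpace ℝ (Fin d)))
    (x : Fin c → EuclideanSpace ℝ (Fin d))
    (hx : ∀ l, ‖x l‖ = 1)
    (θ : ℝ) (hθ : θ ≤ Real.pi / 3)
    (hcone : ∀ l, ∀ u ∈ C l, u ≠ 0 → InnerProductGeometry.angle u (x l) ≤ θ / 2)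
    (hcover : ∀ p ∈ P, ∀ q ∈ P, q ≠ p → ∃ l, q - p ∈ C l)
    (p q : EuclideanSpace ℝ (Fin d)) (hp : p ∈ P) (hq : q ∈ P) (hpq : p ≠ q)
    (hnear : ∀ p' ∈ P, p' ≠ q → dist p q ≤ dist p' q) :
    ∃ l, q - p ∈ C l ∧
      ∀ r ∈ P, r - p ∈ C l → r ≠ p →
        (inner ℝ (x l) (q - p) : ℝ) ≤ (inner ℝ (x l) (r - p) : ℝ) := by
  obtain ⟨l, hql⟩ := hcover p hp q hq hpq.symm
  refine ⟨l, hql, fun r hr hrl hrp => ?_⟩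
  by_contra! hlt
  have hangle : ∀ s ∈ C l, s ≠ 0 → angle s (x l) ≤ π / 6 := fun s hs hs0 =>
    (hcone l s hs hs0).trans (by linarith)
  have hcloser : ‖(q - p) - (r - p)‖ < ‖q - p‖ :=
    norm_sub_lt_norm_of_inner_lt (hx l) (hangle _ hql (sub_ne_zero.mpr hpq.symm))
      (hangle _ hrl (sub_ne_zero.mpr hrp)) hlt
  have hrq : r ≠ q := by
    rintro rfl
    exact lt_irrefl _ hlt
  have := hnear r hr hrq
  rw [sub_sub_sub_cancel_right, ← dist_eq_norm, ← dist_eq_norm, dist_comm q p] at hcloser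
  rw [dist_comm r q] at this
  linarith
end

section
/- For any ε > 0 there exists θ > 0 such that: for any point p ∈ ℝ^d, any unit vector x_l, and any two points q, q̂ lying in the cone of apex p, axis x_l, and opening angle θ, if ⟨x_l, q̂ - p⟩ ≤ ⟨x_l, q - p⟩ then |p q̂| + (1+ε)·|q q̂| ≤ (1+ε)·|p q|. -/
/-! With `u = q - p` and `v = q̂ - p`, the angle triangle inequality through the axis gives
`∠(u, v) ≤ θ`, hence `⟪u, v⟫ ≥ ‖u‖‖v‖ cos θ`, while the projection hypothesis gives
`‖v‖ cos θ ≤ ‖u‖`. Together these yield `‖u - v‖ ≤ ‖u‖ - (cos θ - sin θ)‖v‖`, and the theorem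
follows once `θ` is small enough that `(1 + ε)(cos θ - sin θ) ≥ 1`. -/

open Real InnerProductGeometry Filter Topology
open scoped RealInnerProductSpace

section ConeInequality

variable {V : Type*} [NormedAddCommGroup V] [InnerProductSpace ℝ V]

theorem norm_mul_norm_mul_cos_le_inner_of_angle_le {u v : V} {θ : ℝ} (hθπ : θ ≤ π)
    (hangle : angle u v ≤ θ) : ‖u‖ * ‖v‖ * cos θ ≤ ⟪u, v⟫ := by
  rw [← cos_angle_mul_norm_mul_norm, mul_comm (cos _)]
  exact mul_le_mul_of_nonneg_left
    (cos_le_cos_of_nonneg_of_le_pi (angle_nonneg u v) hθπ hangle) (by positivity)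

theorem norm_sub_le_of_angle_le {u v : V} {θ : ℝ} (hθ₀ : 0 ≤ θ) (hθπ : θ ≤ π)
    (hangle : angle u v ≤ θ) (hproj : ‖v‖ * cos θ ≤ ‖u‖) :
    ‖u - v‖ ≤ ‖u‖ - (cos θ - sin θ) * ‖v‖ := by
  have hinner := norm_mul_norm_mul_cos_le_inner_of_angle_le hθπ hangle
  have hsin : 0 ≤ sin θ := sin_nonneg_of_nonneg_of_le_pi hθ₀ hθπ
  have hslack : 0 ≤ ‖v‖ * sin θ * (‖u‖ - ‖v‖ * cos θ) :=
    mul_nonneg (mul_nonneg (norm_nonneg v) hsin) (sub_nonneg.mpr hproj)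
  have hrhs : 0 ≤ ‖u‖ - (cos θ - sin θ) * ‖v‖ := by
    linarith [mul_nonneg (norm_nonneg v) hsin]
  -- the right side squared is `‖u‖² - 2‖u‖‖v‖ cos θ + ‖v‖²` plus twice `hslack`
  have hsq : ‖u - v‖ ^ 2 ≤ (‖u‖ - (cos θ - sin θ) * ‖v‖) ^ 2 := by
    nlinarith [norm_sub_sq_real u v, sin_sq_add_cos_sq θ]
  exact (pow_le_pow_iff_left₀ (norm_nonneg _) hrhs two_ne_zero).mp hsq

theorem norm_mul_cos_le_norm_of_inner_le {u v x : V} {θ : ℝ} (hx : ‖x‖ = 1) (hθπ : θ ≤ π)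
    (hangle : angle v x ≤ θ) (hinner : ⟪x, v⟫ ≤ ⟪x, u⟫) : ‖v‖ * cos θ ≤ ‖u‖ := by
  have hv := norm_mul_norm_mul_cos_le_inner_of_angle_le hθπ hangle
  rw [hx, mul_one, real_inner_comm] at hv
  calc ‖v‖ * cos θ ≤ ⟪x, u⟫ := hv.trans hinner
    _ ≤ ‖x‖ * ‖u‖ := real_inner_le_norm x u
    _ = ‖u‖ := by rw [hx, one_mul]

theorem norm_add_mul_norm_sub_le_of_angle_le {u v x : V} {θ ε : ℝ} (hx : ‖x‖ = 1)
    (hε : 0 ≤ ε) (hθ₀ : 0 ≤ θ) (hθπ : θ ≤ π) (hθε : 1 ≤ (1 + ε) * (cos θ - sin θ))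
    (hu : angle u x ≤ θ / 2) (hv : angle v x ≤ θ / 2) (hinner : ⟪x, v⟫ ≤ ⟪x, u⟫) :
    ‖v‖ + (1 + ε) * ‖u - v‖ ≤ (1 + ε) * ‖u‖ := by
  have hangle : angle u v ≤ θ := by
    linarith [angle_le_angle_add_angle u x v, angle_comm x v]
  have hproj := norm_mul_cos_le_norm_of_inner_le hx hθπ (by linarith) hinner
  have hdist := norm_sub_le_of_angle_le hθ₀ hθπ hangle hproj
  nlinarith [mul_le_mul_of_nonneg_left hdist (by linarith : (0 : ℝ) ≤ 1 + ε),
    mul_le_mul_of_nonneg_right hθε (norm_nonneg v)]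

end ConeInequality

theorem exists_pos_le_pi_one_le_mul_cos_sub_sin {ε : ℝ} (hε : 0 < ε) :
    ∃ θ : ℝ, 0 < θ ∧ θ ≤ π ∧ 1 ≤ (1 + ε) * (cos θ - sin θ) := by
  have hcont : Continuous fun θ : ℝ => (1 + ε) * (cos θ - sin θ) := by fun_prop
  have hnear : ∀ᶠ θ in 𝓝[>] (0 : ℝ), 1 < (1 + ε) * (cos θ - sin θ) :=
    nhdsWithin_le_nhds <| continuousAt_const.eventually_lt hcont.continuousAt (by simpa)
  obtain ⟨θ, hθε, hθ, hθπ⟩ := (hnear.and (Ioo_mem_nhdsGT pi_pos)).exists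
  exact ⟨θ, hθ, hθπ.le, hθε.le⟩

/-- Abam–de Berg cone inequality: for every `ε > 0` there is `θ > 0` such
that for any apex `p`, unit axis `xl`, and points `q, qhat` in the cone of apex `p`,
axis `xl` and opening angle `θ`, if `qhat` has the smaller `xl`-projection then
`|p qhat| + (1+ε)·|q qhat| ≤ (1+ε)·|p q|`. -/
theorem stmt4 (ε : ℝ) (hε : 0 < ε) :
    ∃ θ : ℝ, 0 < θ ∧
      ∀ (d : ℕ) (p q qhat xl : EuclideanSpace ℝ (Fin d)), ‖xl‖ = 1 →
        InnerProductGeometry.angle (q - p) xl ≤ θ / 2 →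
        InnerProductGeometry.angle (qhat - p) xl ≤ θ / 2 →
        (inner ℝ xl (qhat - p) : ℝ) ≤ (inner ℝ xl (q - p) : ℝ) →
        dist p qhat + (1 + ε) * dist q qhat ≤ (1 + ε) * dist p q := by
  obtain ⟨θ, hθ, hθπ, hθε⟩ := exists_pos_le_pi_one_le_mul_cos_sub_sin hε
  refine ⟨θ, hθ, fun d p q qhat xl hxl hq hqhat hinner => ?_⟩
  have key := norm_add_mul_norm_sub_le_of_angle_le hxl hε.le hθ.le hθπ hθε hq hqhat hinner
  rwa [dist_eq_norm' p qhat, dist_eq_norm' p q, dist_eq_norm q qhat,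
    ← sub_sub_sub_cancel_right q qhat p]
end

section
/- Let Ψ = {(B_1, R_1), …, (B_m, R_m)} be a CSPD for a finite set P with respect to a cone C_l of opening angle at most π/3 and axis x_l. For each i let b_i maximize ⟨x_l, ·⟩ over B_i and r_i minimize ⟨x_l, ·⟩ over R_i, and define the edge set E_l = {(b_i, r_i) : i = 1,…,m} (the RNN_l graph). If p ∈ P, q is the nearest neighbor of p in P, and q ∈ C_l(p), then letting i be the unique index with p ∈ B_i and q ∈ R_i, the pair (p, r_i) is an edge of the RNN_l graph, i.e., b_i = p. -/
/-!
If `b i ≠ p`, then `⟪xl, p⟫ < ⟪xl, b i⟫`, and both `q - p` and `q - b i` lie in the cone of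
half-angle `π / 6` around `xl`. The part of such a vector orthogonal to `xl` is at most `1 / √3`
times its axial part, so for two of them `u`, `v` we get `‖u‖² ≤ (4/3) ⟪xl, u⟫²` and
`⟪u, v⟫ ≥ (2/3) ⟪xl, u⟫ ⟪xl, v⟫`; hence `‖v - u‖ < ‖v‖` as soon as `⟪xl, u⟫ < ⟪xl, v⟫`.
For `u = q - b i`, `v = q - p` this puts `b i` strictly closer to `p` than its nearest
neighbour `q`.
-/

open InnerProductGeometry Real
open scoped RealInnerProductSpace

section

variable {V : Type*} [NormedAddCommGroup V] [InnerProductSpace ℝ V]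

lemma norm_mul_norm_mul_cos_le_inner {x y : V} {α : ℝ} (h : angle x y ≤ α) (hα : α ≤ π) :
    ‖x‖ * ‖y‖ * cos α ≤ ⟪x, y⟫ := by
  rw [← cos_angle_mul_norm_mul_norm, mul_comm]
  gcongr
  exact cos_le_cos_of_nonneg_of_le_pi (angle_nonneg x y) hα h

lemma sqrt_three_div_two_mul_norm_le_inner_s6 {e w : V} (he : ‖e‖ = 1)
    (hw : angle w e ≤ π / 6) : √3 / 2 * ‖w‖ ≤ ⟪e, w⟫ := by
  have := norm_mul_norm_mul_cos_le_inner hw (by linarith [pi_pos])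
  rwa [he, cos_pi_div_six, mul_one, mul_comm, real_inner_comm] at this

/-- Cauchy–Schwarz for the components of `u` and `v` orthogonal to the unit vector `e`. -/
lemma sq_inner_sub_inner_mul_inner_le {e : V} (he : ‖e‖ = 1) (u v : V) :
    (⟪u, v⟫ - ⟪e, u⟫ * ⟪e, v⟫) ^ 2 ≤
      (‖u‖ ^ 2 - ⟪e, u⟫ ^ 2) * (‖v‖ ^ 2 - ⟪e, v⟫ ^ 2) := by
  have hee : ⟪e, e⟫ = 1 := by rw [real_inner_self_eq_norm_sq, he, one_pow]
  have key := real_inner_mul_inner_self_le (u - ⟪e, u⟫ • e) (v - ⟪e, v⟫ • e)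
  simp only [inner_sub_left, inner_sub_right, real_inner_smul_left, real_inner_smul_right, hee,
    real_inner_self_eq_norm_sq, real_inner_comm e, norm_smul, he, mul_one, norm_eq_abs,
    sq_abs] at key
  linarith

lemma norm_sub_lt_norm_of_inner_lt_s6 {e u v : V} (he : ‖e‖ = 1) (hu : u ≠ 0)
    (hue : angle u e ≤ π / 6) (hve : angle v e ≤ π / 6) (huv : ⟪e, u⟫ < ⟪e, v⟫) :
    ‖v - u‖ < ‖v‖ := by
  set a := ⟪e, u⟫
  set b := ⟪e, v⟫
  have hnorm_sq {w : V} (hw : angle w e ≤ π / 6) : 3 * ‖w‖ ^ 2 ≤ 4 * ⟪e, w⟫ ^ 2 := by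
    have h := sqrt_three_div_two_mul_norm_le_inner_s6 he hw
    have h3 : √3 ^ 2 = 3 := sq_sqrt (by norm_num)
    nlinarith [pow_le_pow_left₀ (by positivity) h 2]
  have ha : 0 < a := lt_of_lt_of_le (by positivity) (sqrt_three_div_two_mul_norm_le_inner_s6 he hue)
  have hb : 0 < b := ha.trans huv
  have hu2 : 3 * ‖u‖ ^ 2 ≤ 4 * a ^ 2 := hnorm_sq hue
  have hv2 : 3 * ‖v‖ ^ 2 ≤ 4 * b ^ 2 := hnorm_sq hve
  have hperp (w : V) : 0 ≤ ‖w‖ ^ 2 - ⟪e, w⟫ ^ 2 := by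
    have := abs_real_inner_le_norm e w
    rw [he, one_mul] at this
    linarith [sq_le_sq' (abs_le.mp this).1 (abs_le.mp this).2]
  have hcs : (⟪u, v⟫ - a * b) ^ 2 ≤ (a * b / 3) ^ 2 := by
    calc (⟪u, v⟫ - a * b) ^ 2 ≤ (‖u‖ ^ 2 - a ^ 2) * (‖v‖ ^ 2 - b ^ 2) :=
          sq_inner_sub_inner_mul_inner_le he u v
      _ ≤ (a ^ 2 / 3) * (b ^ 2 / 3) := by
          apply mul_le_mul <;> linarith [hperp u, hperp v]
      _ = (a * b / 3) ^ 2 := by ring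
  have hinner : 2 * a * b ≤ 3 * ⟪u, v⟫ := by
    nlinarith [abs_le_of_sq_le_sq' hcs (by positivity : (0:ℝ) ≤ a * b / 3)]
  have : ‖v - u‖ ^ 2 < ‖v‖ ^ 2 := by
    rw [norm_sub_sq_real, real_inner_comm]
    nlinarith
  exact lt_of_pow_lt_pow_left₀ 2 (norm_nonneg v) this

end

theorem stmt6_general {d m : ℕ} (P : Finset (EuclideanSpace ℝ (Fin d)))
    (xl : EuclideanSpace ℝ (Fin d)) (hxl : ‖xl‖ = 1)
    (θ : ℝ) (hθ : θ ≤ Real.pi / 3)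
    (Cl : Set (EuclideanSpace ℝ (Fin d)))
    (hcone : ∀ u ∈ Cl, u ≠ 0 → InnerProductGeometry.angle u xl ≤ θ / 2)
    (h0 : (0 : EuclideanSpace ℝ (Fin d)) ∉ Cl)
    (B R : Fin m → Finset (EuclideanSpace ℝ (Fin d)))
    (hBP : ∀ i, B i ⊆ P)
    (hb : ∀ i : Fin m, ∀ p ∈ B i, ∀ q ∈ R i, q - p ∈ Cl)
    (hdistinct : Set.InjOn (fun a => (inner ℝ xl a : ℝ)) (P : Set (EuclideanSpace ℝ (Fin d))))
    (b : Fin m → EuclideanSpace ℝ (Fin d))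
    (hbmax : ∀ i, b i ∈ B i ∧ ∀ a ∈ B i, (inner ℝ xl a : ℝ) ≤ (inner ℝ xl (b i) : ℝ))
    (p q : EuclideanSpace ℝ (Fin d)) (hp : p ∈ P)
    (hnear : ∀ r' ∈ P, r' ≠ p → dist p q ≤ dist p r')
    (hqC : q - p ∈ Cl)
    (i : Fin m) (hpB : p ∈ B i) (hqR : q ∈ R i) :
    b i = p := by
  have hangle {w} (hw : w ∈ Cl) : w ≠ 0 ∧ angle w xl ≤ π / 6 :=
    have hw0 : w ≠ 0 := fun h => h0 (h ▸ hw)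
    ⟨hw0, (hcone w hw hw0).trans (by linarith)⟩
  obtain ⟨hbB, hbmax⟩ := hbmax i
  have hbP : b i ∈ P := hBP i hbB
  by_contra hne
  have hlt : inner ℝ xl p < inner ℝ xl (b i) :=
    (hbmax p hpB).lt_of_ne fun h => hne (hdistinct hbP hp h.symm)
  obtain ⟨hbq0, hbq⟩ := hangle (hb i (b i) hbB q hqR)
  have hcloser : ‖(q - p) - (q - b i)‖ < ‖q - p‖ :=
    norm_sub_lt_norm_of_inner_lt_s6 hxl hbq0 hbq (hangle hqC).2
      (by simp only [inner_sub_right]; linarith)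
  rw [sub_sub_sub_cancel_left] at hcloser
  exact (hnear (b i) hbP hne).not_gt (by simpa only [dist_comm p, dist_eq_norm] using hcloser)

/-- for the RNN_l graph built from a CSPD with respect to a cone of opening
angle `θ ≤ π/3` with unit axis `xl`, if `q` is the nearest neighbor of `p` and `q ∈ C_l(p)`,
then in the unique pair `(B i, R i)` with `p ∈ B i`, `q ∈ R i`, the point `b i` of maximum
`xl`-projection in `B i` is `p` itself; hence `(p, r i)` is an edge of the RNN_l graph. -/
theorem stmt6 {d m : ℕ} (P : Finset (EuclideanSpace ℝ (Fin d)))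
    (xl : EuclideanSpace ℝ (Fin d)) (hxl : ‖xl‖ = 1)
    (θ : ℝ) (hθ : θ ≤ Real.pi / 3)
    (Cl : Set (EuclideanSpace ℝ (Fin d)))
    (hcone : ∀ u ∈ Cl, u ≠ 0 → InnerProductGeometry.angle u xl ≤ θ / 2)
    (h0 : (0 : EuclideanSpace ℝ (Fin d)) ∉ Cl)
    (B R : Fin m → Finset (EuclideanSpace ℝ (Fin d)))
    (hBP : ∀ i, B i ⊆ P) (hRP : ∀ i, R i ⊆ P)
    (ha : ∀ p ∈ P, ∀ q ∈ P, q - p ∈ Cl → ∃! i : Fin m, p ∈ B i ∧ q ∈ R i)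
    (hb : ∀ i : Fin m, ∀ p ∈ B i, ∀ q ∈ R i, q - p ∈ Cl)
    (hdistinct : Set.InjOn (fun a => (inner ℝ xl a : ℝ)) (P : Set (EuclideanSpace ℝ (Fin d))))
    (b r : Fin m → EuclideanSpace ℝ (Fin d))
    (hbmax : ∀ i, b i ∈ B i ∧ ∀ a ∈ B i, (inner ℝ xl a : ℝ) ≤ (inner ℝ xl (b i) : ℝ))
    (hrmin : ∀ i, r i ∈ R i ∧ ∀ a ∈ R i, (inner ℝ xl (r i) : ℝ) ≤ (inner ℝ xl a : ℝ))
    (p q : EuclideanSpace ℝ (Fin d)) (hp : p ∈ P) (hq : q ∈ P) (hqp : q ≠ p)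
    (hnear : ∀ r' ∈ P, r' ≠ p → dist p q ≤ dist p r')
    (hqC : q - p ∈ Cl)
    (i : Fin m) (hpB : p ∈ B i) (hqR : q ∈ R i) :
    b i = p :=
  stmt6_general P xl hxl θ hθ Cl hcone h0 B R hBP hb hdistinct b hbmax p q hp hnear hqC i hpB hqR
end
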